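/- arXiv:1212.4895 — 5 statements merged into one kernel-verified Lean document; each statement's English description precedes it below -/
import Mathlib

section
/- For every integer n ≥ 1, the n-dimensional varietal hypercube VQ_n is vertex-transitive: for any two vertices X and Y of VQ_n there exists a graph automorphism σ of VQ_n with σ(X) = Y. -/
/-- Adjacency relation of the `n`-dimensional varietal hypercube `VQ_n`.
A vertex is a binary string `x_n x_{n-1} ... x_1`, encoded as a function
`X : Fin n → Bool` where `X ⟨k-1, _⟩` is the bit `x_k` (so index `n-1` is the
leading bit `x_n`). -/
def vqAdj : (n : ℕ) → (Fin n → Bool) → (Fin n → Bool) → Prop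
  | 0, _, _ => False
  | 1, X, Y => X ≠ Y
  | (n + 2), X, Y =>
    if X (Fin.last (n + 1)) = Y (Fin.last (n + 1)) then
      -- both in the same copy of `VQ_{n+1}`
      vqAdj (n + 1) (Fin.init X) (Fin.init Y)
    else if (n + 2) % 3 = 0 then
      -- transversal edge, `n + 2` divisible by 3:
      -- `x_{n-3} ... x_1 = y_{n-3} ... y_1` and
      -- `(x_{n-1}x_{n-2}, y_{n-1}y_{n-2}) ∈ {(00,00),(01,01),(10,11),(11,10)}`
      (∀ i : Fin (n + 2), (i : ℕ) < n - 1 → X i = Y i) ∧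
      Y ⟨n, by omega⟩ = X ⟨n, by omega⟩ ∧
      Y ⟨n - 1, by omega⟩ = xor (X ⟨n, by omega⟩) (X ⟨n - 1, by omega⟩)
    else
      -- transversal edge, `n + 2` not divisible by 3:
      -- `x_{n-1} ... x_1 = y_{n-1} ... y_1`
      Fin.init X = Fin.init Y

/-- The `n`-dimensional varietal hypercube. -/
def VQ (n : ℕ) : SimpleGraph (Fin n → Bool) := SimpleGraph.fromRel (vqAdj n)

/-- Apply `f` to the lowest `k` bits of a string of `m` bits, keeping the top
`m - k` bits unchanged. -/
def applyLow {m k : ℕ} (h : k ≤ m) (f : (Fin k → Bool) → (Fin k → Bool))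
    (X : Fin m → Bool) : Fin m → Bool :=
  fun i => if h' : (i : ℕ) < k then f (fun j => X (Fin.castLE h j)) ⟨i, h'⟩ else X i

/-- Complement the bit at (0-based) index `t`, keeping all other bits unchanged. -/
def flipAt {m : ℕ} (t : ℕ) (X : Fin m → Bool) : Fin m → Bool :=
  fun i => if (i : ℕ) = t then !(X i) else X i

/-!
The edges of `VQ_n` are exactly the pairs `{X, τ_k X}` for `n` involutions `τ_k` (bits are
0-based): complement bit `k` and, when `3 ∣ k + 1`, also add bit `k - 1` to bit `k - 2`.
For each `k` there is an involution `σ_k` that complements bit `k`, changes no higher bit,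
and commutes with every `τ_m`, hence is an automorphism. Composing the `σ_k` moves any
vertex to any other, fixing the bits from the top down.
-/

theorem Fin.eq_iff_init_eq_and_last_eq {n : ℕ} {α : Type*} {f g : Fin (n + 1) → α} :
    f = g ↔ Fin.init f = Fin.init g ∧ f (Fin.last n) = g (Fin.last n) := by
  simp only [funext_iff, Fin.forall_fin_succ', Fin.init]

namespace SimpleGraph

variable {V : Type*} {G : SimpleGraph V}

theorem fromRel_adj_map {r : V → V → Prop} {f : V → V} (hf : Function.Injective f)
    (hr : ∀ ⦃x y⦄, r x y → r (f x) (f y)) ⦃x y : V⦄ (h : (fromRel r).Adj x y) :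
    (fromRel r).Adj (f x) (f y) := by
  rw [fromRel_adj] at h ⊢
  exact ⟨hf.ne h.1, h.2.imp (fun h => hr h) (fun h => hr h)⟩

def Iso.ofInvolutive {f : V → V} (hf : Function.Involutive f)
    (hadj : ∀ ⦃x y⦄, G.Adj x y → G.Adj (f x) (f y)) : G ≃g G where
  toEquiv := hf.toPerm
  map_rel_iff' {x y} := by
    change G.Adj (f x) (f y) ↔ G.Adj x y
    exact ⟨fun h => by simpa only [hf x, hf y] using hadj h, fun h => hadj h⟩

theorem exists_iso_apply_eq_of_bitFlip {n : ℕ} {G : SimpleGraph (Fin n → Bool)}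
    (hflip : ∀ k : Fin n, ∃ σ : G ≃g G, ∀ X, σ X k = !X k ∧ ∀ i, k < i → σ X i = X i)
    (X Y : Fin n → Bool) : ∃ σ : G ≃g G, σ X = Y := by
  suffices key : ∀ m, ∀ Z : Fin n → Bool, (∀ i : Fin n, m ≤ (i : ℕ) → Z i = Y i) →
      ∃ σ : G ≃g G, σ Z = Y from
    key n X fun i hi => absurd i.isLt (by omega)
  intro m
  induction m with
  | zero => exact fun Z hZY => ⟨Iso.refl, funext fun i => hZY i (Nat.zero_le _)⟩
  | succ m ih =>
    intro Z hZY
    by_cases hm : m < n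
    swap
    · exact ih Z fun i hi => hZY i (by omega)
    set k : Fin n := ⟨m, hm⟩
    by_cases hk : Z k = Y k
    · refine ih Z fun i hi => ?_
      obtain hik | hik := hi.eq_or_lt
      · exact (Fin.ext hik : k = i) ▸ hk
      · exact hZY i hik
    obtain ⟨σ, hσ⟩ := hflip k
    obtain ⟨τ, hτ⟩ := ih (σ Z) fun i hi => by
      obtain hik | hik := hi.eq_or_lt
      · rw [← (Fin.ext hik : k = i), (hσ Z).1]
        revert hk; cases Z k <;> cases Y k <;> simp
      · rw [(hσ Z).2 i hik]; exact hZY i hik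
    exact ⟨σ.trans τ, hτ⟩

end SimpleGraph

namespace VQ

variable {n : ℕ}

/-- The neighbour of `X` across the paper's dimension `k + 1`. -/
def neighbor (k : Fin n) (X : Fin n → Bool) : Fin n → Bool := fun i =>
  if i = k then !X i
  else if h : (k : ℕ) % 3 = 2 ∧ (i : ℕ) + 2 = k then xor (X ⟨i + 1, by omega⟩) (X i)
  else X i

/-- Complementing bit `k` alone does not commute with `neighbor (k + 1)` when `3 ∣ k + 2`,
since that map reads bit `k`; the correction on bit `k - 1` restores commutation. -/
def bitFlip (k : Fin n) (X : Fin n → Bool) : Fin n → Bool := fun i =>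
  if i = k then !X i
  else if h : (k : ℕ) % 3 = 1 ∧ (i : ℕ) + 1 = k ∧ (k : ℕ) + 1 < n then
    xor (X ⟨k + 1, h.2.2⟩) (X i)
  else X i

theorem bitFlip_involutive (k : Fin n) : Function.Involutive (bitFlip k) := by
  intro X
  funext i
  obtain ⟨i, hi⟩ := i; obtain ⟨k, hk⟩ := k
  simp only [bitFlip, Fin.ext_iff]
  split_ifs <;> (try omega) <;> simp_all

theorem bitFlip_apply_self (k : Fin n) (X : Fin n → Bool) : bitFlip k X k = !X k := by
  simp [bitFlip]

theorem bitFlip_apply_of_lt {k i : Fin n} (h : k < i) (X : Fin n → Bool) :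
    bitFlip k X i = X i := by
  rw [Fin.lt_def] at h
  simp only [bitFlip, Fin.ext_iff]
  split_ifs <;> first | omega | rfl

/-- The two maps change disjoint sets of bits and read no bit the other changes, except when
`j + 1 = k` and `3 ∣ k + 1`: then both composites complement bits `j` and `k` and add
`x_j + x_k + 1` to bit `k - 2`. -/
theorem bitFlip_neighbor_comm (j k : Fin n) (X : Fin n → Bool) :
    bitFlip j (neighbor k X) = neighbor k (bitFlip j X) := by
  funext i
  obtain ⟨i, hi⟩ := i; obtain ⟨j, hj⟩ := j; obtain ⟨k, hk⟩ := k
  simp only [bitFlip, neighbor, Fin.ext_iff]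
  split_ifs <;> (try omega) <;> simp_all [Bool.xor_left_comm]

theorem neighbor_castSucc_apply_last (k : Fin (n + 1)) (X : Fin (n + 2) → Bool) :
    neighbor k.castSucc X (Fin.last (n + 1)) = X (Fin.last (n + 1)) := by
  have := k.isLt
  simp only [neighbor, Fin.ext_iff, Fin.val_last, Fin.val_castSucc]
  split_ifs <;> first | omega | rfl

theorem neighbor_last_apply_last (X : Fin (n + 1) → Bool) :
    neighbor (Fin.last n) X (Fin.last n) = !X (Fin.last n) := by
  simp [neighbor]

theorem init_neighbor_castSucc (k : Fin (n + 1)) (X : Fin (n + 2) → Bool) :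
    Fin.init (neighbor k.castSucc X) = neighbor k (Fin.init X) := by
  funext i
  simp only [Fin.init, neighbor, Fin.castSucc_inj, Fin.val_castSucc]
  split_ifs <;> rfl

theorem eq_neighbor_last_iff_of_three_dvd (h : (n + 2) % 3 = 0) (X Y : Fin (n + 2) → Bool) :
    Y = neighbor (Fin.last (n + 1)) X ↔ Y (Fin.last (n + 1)) = !X (Fin.last (n + 1)) ∧
      (∀ i : Fin (n + 2), (i : ℕ) < n - 1 → X i = Y i) ∧
      Y ⟨n, by omega⟩ = X ⟨n, by omega⟩ ∧
      Y ⟨n - 1, by omega⟩ = xor (X ⟨n, by omega⟩) (X ⟨n - 1, by omega⟩) := by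
  have hn : 1 ≤ n := by omega
  constructor
  · rintro rfl
    refine ⟨neighbor_last_apply_last X, fun i hi => ?_, ?_, ?_⟩ <;>
      simp only [neighbor, Fin.ext_iff, Fin.val_last] <;> split_ifs <;>
      first | omega | rfl | simp only [Nat.sub_add_cancel hn]
  · rintro ⟨hlast, hlow, hmid, htop⟩
    funext i
    obtain ⟨i, hi⟩ := i
    simp only [neighbor, Fin.ext_iff, Fin.val_last]
    split_ifs with h₁ h₂
    · obtain rfl : i = n + 1 := h₁
      exact hlast
    · obtain rfl : i = n - 1 := by omega
      simpa only [Nat.sub_add_cancel hn] using htop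
    · obtain hi | rfl : i < n - 1 ∨ i = n := by omega
      · exact (hlow _ hi).symm
      · exact hmid

theorem eq_neighbor_last_iff_of_not_three_dvd (h : (n + 2) % 3 ≠ 0) (X Y : Fin (n + 2) → Bool) :
    Y = neighbor (Fin.last (n + 1)) X ↔
      Y (Fin.last (n + 1)) = !X (Fin.last (n + 1)) ∧ Fin.init X = Fin.init Y := by
  rw [funext_iff, Fin.forall_fin_succ', and_comm, funext_iff]
  refine and_congr (by rw [neighbor_last_apply_last]) (forall_congr' fun i => ?_)
  have := i.isLt
  simp only [Fin.init, neighbor, Fin.ext_iff, Fin.val_last, Fin.val_castSucc]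
  split_ifs <;> first | omega | exact eq_comm

theorem vqAdj_iff_exists_eq_neighbor :
    ∀ (n : ℕ) (X Y : Fin n → Bool), vqAdj n X Y ↔ ∃ k, Y = neighbor k X
  | 0, _, _ => by simp [vqAdj]
  | 1, X, Y => by
    change X ≠ Y ↔ _
    revert X Y
    decide
  | n + 2, X, Y => by
    rw [vqAdj, Fin.exists_fin_succ']
    by_cases htop : X (Fin.last (n + 1)) = Y (Fin.last (n + 1))
    · have hY : Y ≠ neighbor (Fin.last (n + 1)) X := fun hY => by
        have := congrFun hY (Fin.last _)
        rw [neighbor_last_apply_last, Bool.eq_not] at this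
        exact this htop.symm
      rw [if_pos htop, vqAdj_iff_exists_eq_neighbor (n + 1), or_iff_left hY]
      refine exists_congr fun k => ?_
      rw [Fin.eq_iff_init_eq_and_last_eq (f := Y), init_neighbor_castSucc,
        neighbor_castSucc_apply_last, and_iff_left htop.symm]
    · have hY : ∀ k : Fin (n + 1), Y ≠ neighbor k.castSucc X := fun k hY => by
        have := congrFun hY (Fin.last _)
        rw [neighbor_castSucc_apply_last] at this
        exact htop this.symm
      have hlast : Y (Fin.last (n + 1)) = !X (Fin.last (n + 1)) := Bool.eq_not.2 (Ne.symm htop)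
      simp only [if_neg htop, hY, exists_false, false_or]
      split_ifs with h3
      · rw [eq_neighbor_last_iff_of_three_dvd h3, and_iff_right hlast]
      · rw [eq_neighbor_last_iff_of_not_three_dvd h3, and_iff_right hlast]

theorem vqAdj_bitFlip (j : Fin n) ⦃X Y : Fin n → Bool⦄ (h : vqAdj n X Y) :
    vqAdj n (bitFlip j X) (bitFlip j Y) := by
  obtain ⟨k, rfl⟩ := (vqAdj_iff_exists_eq_neighbor n X Y).1 h
  exact (vqAdj_iff_exists_eq_neighbor n _ _).2 ⟨k, bitFlip_neighbor_comm j k X⟩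

def bitFlipIso (k : Fin n) : VQ n ≃g VQ n :=
  SimpleGraph.Iso.ofInvolutive (bitFlip_involutive k)
    (SimpleGraph.fromRel_adj_map (bitFlip_involutive k).injective (vqAdj_bitFlip k))

end VQ

theorem VQ_vertexTransitive_general (n : ℕ) (X Y : Fin n → Bool) :
    ∃ σ : VQ n ≃g VQ n, σ X = Y :=
  SimpleGraph.exists_iso_apply_eq_of_bitFlip (fun k => ⟨VQ.bitFlipIso k, fun X =>
    ⟨VQ.bitFlip_apply_self k X, fun _ hi => VQ.bitFlip_apply_of_lt hi X⟩⟩) X Y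

/-- **Theorem (vertex-transitivity).** For every `n ≥ 1`, the varietal hypercube `VQ_n`
is vertex-transitive: for any two vertices `X, Y` there is a graph automorphism `σ`
of `VQ_n` with `σ X = Y`. -/
theorem VQ_vertexTransitive (n : ℕ) (hn : 1 ≤ n) (X Y : Fin n → Bool) :
    ∃ σ : VQ n ≃g VQ n, σ X = Y :=
  VQ_vertexTransitive_general n X Y
end

section
/- For every integer n ≥ 1, the map σ₁ on the vertex set of the n-dimensional varietal hypercube VQ_n defined by σ₁(x_n x_{n-1} ... x_1) = x̄_n x_{n-1} ... x_1 (complementing the leading bit and leaving all other bits unchanged) is a graph automorphism of VQ_n. -/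
/- Flipping the leading bit swaps the two copies `VQ⁰_n` and `VQ¹_n` and changes none of the
lower bits; since the condition for a transversal edge only reads lower bits, and the edges
inside a copy ignore the leading bit, adjacency is preserved. -/

lemma flipAt_involutive {m : ℕ} (t : ℕ) : Function.Involutive (flipAt (m := m) t) := by
  intro X
  funext i
  by_cases h : (i : ℕ) = t <;> simp [flipAt, h]

lemma flipAt_apply_of_ne {m t : ℕ} (X : Fin m → Bool) {i : Fin m} (hi : (i : ℕ) ≠ t) :
    flipAt t X i = X i :=
  if_neg hi

lemma flipAt_apply_last {n : ℕ} (X : Fin (n + 1) → Bool) :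
    flipAt n X (Fin.last n) = !X (Fin.last n) :=
  if_pos rfl

lemma init_flipAt_last {n : ℕ} (X : Fin (n + 1) → Bool) : Fin.init (flipAt n X) = Fin.init X :=
  funext fun j => flipAt_apply_of_ne X j.isLt.ne

lemma vqAdj_add_two_flipAt_last_iff (n : ℕ) (X Y : Fin (n + 2) → Bool) :
    vqAdj (n + 2) (flipAt (n + 1) X) (flipAt (n + 1) Y) ↔ vqAdj (n + 2) X Y := by
  have hlow : ∀ Z : Fin (n + 2) → Bool, ∀ i : Fin (n + 2), (i : ℕ) ≤ n →
      flipAt (n + 1) Z i = Z i := fun Z i hi => flipAt_apply_of_ne Z (by omega)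
  have hlast : flipAt (n + 1) X (Fin.last (n + 1)) = flipAt (n + 1) Y (Fin.last (n + 1)) ↔
      X (Fin.last (n + 1)) = Y (Fin.last (n + 1)) := by
    simp only [flipAt_apply_last, Bool.not_inj_iff]
  simp only [vqAdj, hlast, init_flipAt_last,
    hlow X ⟨n, _⟩ le_rfl, hlow Y ⟨n, _⟩ le_rfl,
    hlow X ⟨n - 1, _⟩ (Nat.sub_le n 1), hlow Y ⟨n - 1, _⟩ (Nat.sub_le n 1)]
  split_ifs
  · rfl
  · refine and_congr (forall_congr' fun i => imp_congr_right fun hi => ?_) Iff.rfl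
    rw [hlow X i (by omega), hlow Y i (by omega)]
  · rfl

lemma vqAdj_flipAt_last_iff (n : ℕ) (X Y : Fin n → Bool) :
    vqAdj n (flipAt (n - 1) X) (flipAt (n - 1) Y) ↔ vqAdj n X Y :=
  match n with
  | 0 => Iff.rfl
  | 1 => not_congr (flipAt_involutive 0).injective.eq_iff
  | n + 2 => vqAdj_add_two_flipAt_last_iff n X Y

theorem VQ_flipTop_isAutomorphism_general (n : ℕ) :
    ∃ σ : VQ n ≃g VQ n, ∀ X : Fin n → Bool, σ X = flipAt (n - 1) X := by
  refine ⟨⟨(flipAt_involutive (n - 1)).toPerm, fun {X Y} => ?_⟩, fun X => rfl⟩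
  simp only [VQ, SimpleGraph.fromRel_adj, Function.Involutive.coe_toPerm,
    (flipAt_involutive (n - 1)).injective.ne_iff, vqAdj_flipAt_last_iff]

/-- **Lemma 2.2.** For `n ≥ 1`, the map `σ₁` complementing the leading bit `x_n`
(index `n - 1`) and fixing all other bits is a graph automorphism of `VQ_n`. -/
theorem VQ_flipTop_isAutomorphism (n : ℕ) (hn : 1 ≤ n) :
    ∃ σ : VQ n ≃g VQ n, ∀ X : Fin n → Bool, σ X = flipAt (n - 1) X :=
  VQ_flipTop_isAutomorphism_general n
end

section
/- Let n be a positive multiple of 3 with n ≥ 3, and let φ be a graph automorphism of VQ_{n-3}. Define φ₂ and φ₃ on the vertex set of VQ_{n-1} by φ₂(x_{n-1}x_{n-2}X_{n-3}) = x̄_{n-1}x_{n-2}φ(X_{n-3}) and φ₃(x_{n-1}x_{n-2}X_{n-3}) = x̄_{n-1}x̄_{n-2}φ(X_{n-3}), where X_{n-3} = x_{n-3}...x_1. Then the map σ₀ on the vertex set of VQ_n defined by σ₀(1 X_{n-1}) = 1 φ₂(X_{n-1}) and σ₀(0 X_{n-1}) = 0 φ₃(X_{n-1}) is a graph automorphism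 of VQ_n. -/
/-!
`σ₀` fixes `x_n` and acts on the halves `VQ¹_n` and `VQ⁰_n`, both copies of `VQ_{n-1}`, by `φ₂`
and `φ₃`. These are automorphisms of `VQ_{n-1}`: applying `φ` to the low `n - 3` bits is one
because `3 ∣ n - 3`, complementing the top bit `x_{n-1}` always is, and complementing `x_{n-2}`
is one because `n - 1` is not a multiple of `3`. A transversal edge of `VQ_n` joins
`0 x_{n-1} x_{n-2} L` to `1 x_{n-1} (x_{n-1} ⊕ x_{n-2}) L`; its image joins
`0 x̄_{n-1} x̄_{n-2} φ(L)` to `1 x̄_{n-1} (x_{n-1} ⊕ x_{n-2}) φ(L)`, which is again a transversal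
edge since `x̄_{n-1} ⊕ x̄_{n-2} = x_{n-1} ⊕ x_{n-2}`.
-/

def vqCross (n : ℕ) (X Y : Fin (n + 2) → Bool) : Prop :=
  if (n + 2) % 3 = 0 then
    (∀ i : Fin (n + 2), (i : ℕ) < n - 1 → X i = Y i) ∧
    Y ⟨n, by omega⟩ = X ⟨n, by omega⟩ ∧
    Y ⟨n - 1, by omega⟩ = xor (X ⟨n, by omega⟩) (X ⟨n - 1, by omega⟩)
  else Fin.init X = Fin.init Y

theorem vqAdj_succ_succ {n : ℕ} (X Y : Fin (n + 2) → Bool) :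
    vqAdj (n + 2) X Y ↔ if X (Fin.last (n + 1)) = Y (Fin.last (n + 1)) then
      vqAdj (n + 1) (Fin.init X) (Fin.init Y) else vqCross n X Y :=
  Iff.rfl

theorem vqCross_of_not_dvd {n : ℕ} (h : (n + 2) % 3 ≠ 0) (X Y : Fin (n + 2) → Bool) :
    vqCross n X Y ↔ Fin.init X = Fin.init Y := by
  rw [vqCross, if_neg h]

theorem vqCross_of_dvd {m : ℕ} (h : (m + 3) % 3 = 0) (X Y : Fin (m + 3) → Bool) :
    vqCross (m + 1) X Y ↔ (∀ i : Fin (m + 3), (i : ℕ) < m → X i = Y i) ∧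
      Y ⟨m + 1, by omega⟩ = X ⟨m + 1, by omega⟩ ∧
      Y ⟨m, by omega⟩ = xor (X ⟨m + 1, by omega⟩) (X ⟨m, by omega⟩) := by
  rw [vqCross, if_pos h]
  rfl

theorem vqCross_symm {n : ℕ} {X Y : Fin (n + 2) → Bool} (h : vqCross n X Y) :
    vqCross n Y X := by
  by_cases hdvd : (n + 2) % 3 = 0
  · obtain ⟨m, rfl⟩ : ∃ m, n = m + 1 := ⟨n - 1, by omega⟩
    obtain ⟨hlow, htop, hnext⟩ := (vqCross_of_dvd hdvd X Y).1 h
    refine (vqCross_of_dvd hdvd Y X).2 ⟨fun i hi => (hlow i hi).symm, htop.symm, ?_⟩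
    rw [hnext, htop, ← Bool.xor_assoc, Bool.xor_self, Bool.false_xor]
  · exact (vqCross_of_not_dvd hdvd Y X).2 ((vqCross_of_not_dvd hdvd X Y).1 h).symm

theorem vqAdj_symm : ∀ {n : ℕ} {X Y : Fin n → Bool}, vqAdj n X Y → vqAdj n Y X
  | 0, _, _, h => h
  | 1, _, _, h => Ne.symm h
  | n + 2, X, Y, h => by
    rw [vqAdj_succ_succ] at h ⊢
    by_cases hl : X (Fin.last (n + 1)) = Y (Fin.last (n + 1))
    · rw [if_pos hl] at h
      rw [if_pos hl.symm]
      exact vqAdj_symm h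
    · rw [if_neg hl] at h
      rw [if_neg (Ne.symm hl)]
      exact vqCross_symm h

theorem vqAdj_irrefl : ∀ {n : ℕ} (X : Fin n → Bool), ¬ vqAdj n X X
  | 0, _ => id
  | 1, _ => fun h => h rfl
  | n + 2, X => by
    rw [vqAdj_succ_succ, if_pos rfl]
    exact vqAdj_irrefl _

theorem VQ_adj {n : ℕ} {X Y : Fin n → Bool} : (VQ n).Adj X Y ↔ vqAdj n X Y := by
  rw [VQ, SimpleGraph.fromRel_adj]
  exact ⟨fun ⟨_, h⟩ => h.elim id vqAdj_symm,
    fun h => ⟨fun hXY => vqAdj_irrefl Y (hXY ▸ h), Or.inl h⟩⟩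

def IsVQAut (n : ℕ) (F : (Fin n → Bool) → Fin n → Bool) : Prop :=
  Function.Injective F ∧ ∀ X Y, vqAdj n (F X) (F Y) ↔ vqAdj n X Y

namespace IsVQAut

variable {n : ℕ} {F G : (Fin n → Bool) → Fin n → Bool}

theorem comp (hF : IsVQAut n F) (hG : IsVQAut n G) : IsVQAut n (F ∘ G) :=
  ⟨hF.1.comp hG.1, fun X Y => (hF.2 _ _).trans (hG.2 X Y)⟩

theorem of_iso (φ : VQ n ≃g VQ n) : IsVQAut n φ :=
  ⟨φ.injective, fun X Y => by rw [← VQ_adj, ← VQ_adj, φ.map_rel_iff]⟩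

noncomputable def toIso (hF : IsVQAut n F) : VQ n ≃g VQ n where
  toEquiv := Equiv.ofBijective F (Finite.injective_iff_bijective.mp hF.1)
  map_rel_iff' {X Y} := by
    simp only [Equiv.ofBijective_apply, VQ_adj]
    exact hF.2 X Y

end IsVQAut

theorem isVQAut_one {F : (Fin 1 → Bool) → Fin 1 → Bool} (hF : Function.Injective F) :
    IsVQAut 1 F :=
  ⟨hF, fun _ _ => hF.ne_iff⟩

theorem IsVQAut.of_init_last {n : ℕ} {F : (Fin (n + 2) → Bool) → Fin (n + 2) → Bool}
    {g : Bool → (Fin (n + 1) → Bool) → Fin (n + 1) → Bool}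
    (hg : ∀ b, IsVQAut (n + 1) (g b))
    (hinit : ∀ X, Fin.init (F X) = g (X (Fin.last (n + 1))) (Fin.init X))
    (hlast : ∀ X Y, F X (Fin.last (n + 1)) = F Y (Fin.last (n + 1)) ↔
      X (Fin.last (n + 1)) = Y (Fin.last (n + 1)))
    (hcross : ∀ X Y, X (Fin.last (n + 1)) ≠ Y (Fin.last (n + 1)) →
      (vqCross n (F X) (F Y) ↔ vqCross n X Y)) :
    IsVQAut (n + 2) F := by
  refine ⟨fun X Y hXY => ?_, fun X Y => ?_⟩
  · have hl := (hlast X Y).1 (congrFun hXY _)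
    have hi : Fin.init X = Fin.init Y :=
      (hg _).1 (by rw [← hinit X, hXY, hinit Y, hl])
    rw [← Fin.snoc_init_self X, ← Fin.snoc_init_self Y, hi, hl]
  · rw [vqAdj_succ_succ, vqAdj_succ_succ]
    by_cases hl : X (Fin.last (n + 1)) = Y (Fin.last (n + 1))
    · rw [if_pos ((hlast X Y).2 hl), if_pos hl, hinit, hinit, hl]
      exact (hg _).2 _ _
    · rw [if_neg (mt (hlast X Y).1 hl), if_neg hl]
      exact hcross X Y hl

section applyLow

variable {k m : ℕ} {f : (Fin k → Bool) → Fin k → Bool}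

theorem applyLow_of_le (h : k ≤ m) (X : Fin m → Bool) {i : Fin m} (hi : k ≤ i) :
    applyLow h f X i = X i :=
  dif_neg (by omega)

theorem applyLow_self (h : k ≤ k) : applyLow h f = f := by
  funext X i
  simp only [applyLow, dif_pos i.isLt, Fin.castLE_refl]

theorem init_applyLow (h : k ≤ m + 1) (h' : k ≤ m) (X : Fin (m + 1) → Bool) :
    Fin.init (applyLow h f X) = applyLow h' f (Fin.init X) :=
  rfl

theorem applyLow_injective (h : k ≤ m) (hf : Function.Injective f) :
    Function.Injective (applyLow h f) := by
  intro X Y hXY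
  have hlow : (fun j => X (Fin.castLE h j)) = fun j => Y (Fin.castLE h j) := by
    refine hf (funext fun j => ?_)
    simpa [applyLow] using congrFun hXY (Fin.castLE h j)
  funext i
  by_cases hi : (i : ℕ) < k
  · exact congrFun hlow ⟨i, hi⟩
  · rw [← applyLow_of_le h X (not_lt.1 hi), hXY, applyLow_of_le h Y (not_lt.1 hi)]

theorem applyLow_agree_iff (h : k ≤ m) (hf : Function.Injective f) {j : ℕ} (hkj : k ≤ j)
    {X Y : Fin m → Bool} :
    (∀ i : Fin m, (i : ℕ) < j → applyLow h f X i = applyLow h f Y i) ↔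
      ∀ i : Fin m, (i : ℕ) < j → X i = Y i := by
  have hlow : (fun j => X (Fin.castLE h j)) = (fun j => Y (Fin.castLE h j)) ↔
      ∀ i : Fin m, (i : ℕ) < k → X i = Y i :=
    ⟨fun he i hi => congrFun he ⟨i, hi⟩, fun he => funext fun i => he _ i.isLt⟩
  constructor
  · intro he i hi
    by_cases hik : (i : ℕ) < k
    · refine hlow.1 (hf (funext fun i' => ?_)) i hik
      simpa [applyLow] using he (Fin.castLE h i') (by simp; omega)
    · rw [← applyLow_of_le h X (not_lt.1 hik), he i hi, applyLow_of_le h Y (not_lt.1 hik)]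
  · intro he i hi
    by_cases hik : (i : ℕ) < k
    · simp only [applyLow, dif_pos hik, hlow.2 fun i' hi' => he i' (by omega)]
    · rw [applyLow_of_le h X (not_lt.1 hik), he i hi, applyLow_of_le h Y (not_lt.1 hik)]

/-- When `3 ∣ k`, the transversal edges of every level above `k` only see the bits below `k`
through equality. -/
theorem vqCross_applyLow_iff (hk : k % 3 = 0) {j : ℕ} (h : k ≤ j + 2) (hkj : k ≤ j + 1)
    (hf : Function.Injective f) (X Y : Fin (j + 2) → Bool) :
    vqCross j (applyLow h f X) (applyLow h f Y) ↔ vqCross j X Y := by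
  by_cases hdvd : (j + 2) % 3 = 0
  · obtain ⟨m, rfl⟩ : ∃ m, j = m + 1 := ⟨j - 1, by omega⟩
    have hkm : k ≤ m := by omega
    rw [vqCross_of_dvd hdvd, vqCross_of_dvd hdvd, applyLow_agree_iff h hf hkm]
    simp only [applyLow_of_le h _ (show k ≤ ((⟨m, _⟩ : Fin (m + 3)) : ℕ) from hkm),
      applyLow_of_le h _ (show k ≤ ((⟨m + 1, _⟩ : Fin (m + 3)) : ℕ) by simp; omega)]
  · rw [vqCross_of_not_dvd hdvd, vqCross_of_not_dvd hdvd, init_applyLow h hkj,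
      init_applyLow h hkj, (applyLow_injective hkj hf).eq_iff]

theorem IsVQAut.applyLow (hk : k % 3 = 0) (hf : IsVQAut k f) (h : k ≤ m) :
    IsVQAut m (applyLow h f) := by
  induction m, h using Nat.le_induction with
  | base => rwa [applyLow_self]
  | succ m hkm ih =>
    rcases m with _ | j
    · exact isVQAut_one (applyLow_injective _ hf.1)
    · exact IsVQAut.of_init_last (fun _ => ih) (init_applyLow _ hkm)
        (fun X Y => by
          rw [applyLow_of_le _ X (by simp; omega), applyLow_of_le _ Y (by simp; omega)])
        (fun X Y _ => vqCross_applyLow_iff hk _ hkm hf.1 X Y)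

end applyLow

section flipAt

variable {m t : ℕ}

theorem flipAt_of_ne (X : Fin m → Bool) {i : Fin m} (hi : (i : ℕ) ≠ t) : flipAt t X i = X i :=
  if_neg hi

theorem flipAt_apply_eq_xor_iff (X Y : Fin m → Bool) (i : Fin m) (a : Bool) :
    flipAt t Y i = xor a (flipAt t X i) ↔ Y i = xor a (X i) := by
  unfold flipAt
  split_ifs <;> cases a <;> cases X i <;> cases Y i <;> decide

theorem flipAt_apply_eq_iff (X Y : Fin m → Bool) (i : Fin m) :
    flipAt t X i = flipAt t Y i ↔ X i = Y i := by
  simpa [eq_comm] using flipAt_apply_eq_xor_iff X Y i false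

theorem flipAt_injective : Function.Injective (flipAt (m := m) t) := fun X Y h =>
  funext fun i => (flipAt_apply_eq_iff X Y i).1 (congrFun h i)

theorem init_flipAt (X : Fin (m + 1) → Bool) : Fin.init (flipAt t X) = flipAt t (Fin.init X) :=
  rfl

/-- Complementing `x_{t+1}` breaks only the transversal edges of level `t + 2`, and only when
that level is a multiple of `3`. -/
theorem vqCross_flipAt_iff {j : ℕ} (ht : (t + 2) % 3 ≠ 0 ∨ j + 1 ≤ t)
    (X Y : Fin (j + 2) → Bool) : vqCross j (flipAt t X) (flipAt t Y) ↔ vqCross j X Y := by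
  by_cases hdvd : (j + 2) % 3 = 0
  · obtain ⟨m, rfl⟩ : ∃ m, j = m + 1 := ⟨j - 1, by omega⟩
    have htm : ((⟨m + 1, by omega⟩ : Fin (m + 3)) : ℕ) ≠ t := by simp; omega
    rw [vqCross_of_dvd hdvd, vqCross_of_dvd hdvd, flipAt_apply_eq_xor_iff, flipAt_apply_eq_iff,
      flipAt_of_ne X htm]
    simp only [flipAt_apply_eq_iff]
  · rw [vqCross_of_not_dvd hdvd, vqCross_of_not_dvd hdvd, init_flipAt, init_flipAt,
      flipAt_injective.eq_iff]

theorem isVQAut_flipAt : ∀ {n : ℕ}, (t + 2) % 3 ≠ 0 ∨ n ≤ t → IsVQAut (n + 1) (flipAt t)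
  | 0, _ => isVQAut_one flipAt_injective
  | j + 1, ht =>
    IsVQAut.of_init_last (fun _ => isVQAut_flipAt (by omega)) init_flipAt
      (fun X Y => flipAt_apply_eq_iff X Y _) (fun X Y _ => vqCross_flipAt_iff ht X Y)

end flipAt

section sigma₀

variable {m : ℕ} (φ : (Fin m → Bool) → Fin m → Bool)

def phi₂ (Z : Fin (m + 2) → Bool) : Fin (m + 2) → Bool :=
  flipAt (m + 1) (applyLow (Nat.le_add_right m 2) φ Z)

def phi₃ (Z : Fin (m + 2) → Bool) : Fin (m + 2) → Bool :=
  flipAt (m + 1) (flipAt m (applyLow (Nat.le_add_right m 2) φ Z))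

/-- `σ₀` on `VQ_n` with `n = m + 3`; the bit `X (Fin.last (m + 2))` is `x_n`. -/
def sigma₀ (X : Fin (m + 3) → Bool) : Fin (m + 3) → Bool :=
  applyLow (Nat.le_succ (m + 2)) (if X (Fin.last (m + 2)) = true then phi₂ φ else phi₃ φ) X

variable {φ}

theorem isVQAut_phi₂ (hm : m % 3 = 0) (hφ : IsVQAut m φ) : IsVQAut (m + 2) (phi₂ φ) :=
  (isVQAut_flipAt (Or.inr le_rfl)).comp (hφ.applyLow hm _)

theorem isVQAut_phi₃ (hm : m % 3 = 0) (hφ : IsVQAut m φ) : IsVQAut (m + 2) (phi₃ φ) :=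
  (isVQAut_flipAt (Or.inr le_rfl)).comp
    ((isVQAut_flipAt (Or.inl (by omega))).comp (hφ.applyLow hm _))

theorem sigma₀_apply_of_lt (X : Fin (m + 3) → Bool) {i : Fin (m + 3)} (hi : (i : ℕ) < m) :
    sigma₀ φ X i = applyLow (Nat.le_add_right m 3) φ X i := by
  cases hx : X (Fin.last (m + 2)) <;>
    simp [sigma₀, phi₂, phi₃, applyLow, flipAt, hx, hi, show (i : ℕ) < m + 2 by omega,
      show (i : ℕ) ≠ m + 1 by omega, Nat.ne_of_lt hi]

theorem sigma₀_apply_m (X : Fin (m + 3) → Bool) :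
    sigma₀ φ X ⟨m, by omega⟩ = xor (!X (Fin.last (m + 2))) (X ⟨m, by omega⟩) := by
  cases hx : X (Fin.last (m + 2)) <;> simp [sigma₀, phi₂, phi₃, applyLow, flipAt, hx]

theorem sigma₀_apply_m_add_one (X : Fin (m + 3) → Bool) :
    sigma₀ φ X ⟨m + 1, by omega⟩ = !X ⟨m + 1, by omega⟩ := by
  cases hx : X (Fin.last (m + 2)) <;> simp [sigma₀, phi₂, phi₃, applyLow, flipAt, hx]

theorem vqCross_sigma₀_iff (hm : m % 3 = 0) (hφ : Function.Injective φ)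
    {X Y : Fin (m + 3) → Bool} (hXY : X (Fin.last (m + 2)) ≠ Y (Fin.last (m + 2))) :
    vqCross (m + 1) (sigma₀ φ X) (sigma₀ φ Y) ↔ vqCross (m + 1) X Y := by
  have hdvd : (m + 3) % 3 = 0 := by omega
  have hlow : (∀ i : Fin (m + 3), (i : ℕ) < m → sigma₀ φ X i = sigma₀ φ Y i) ↔
      ∀ i : Fin (m + 3), (i : ℕ) < m → X i = Y i := by
    refine (forall_congr' fun i => imp_congr_right fun hi => ?_).trans
      (applyLow_agree_iff (Nat.le_add_right m 3) hφ le_rfl)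
    rw [sigma₀_apply_of_lt X hi, sigma₀_apply_of_lt Y hi]
  have hY : Y (Fin.last (m + 2)) = !X (Fin.last (m + 2)) := by
    revert hXY; cases X (Fin.last (m + 2)) <;> simp
  rw [vqCross_of_dvd hdvd, vqCross_of_dvd hdvd, hlow]
  simp only [sigma₀_apply_m, sigma₀_apply_m_add_one, hY]
  cases X (Fin.last (m + 2)) <;> simp

theorem isVQAut_sigma₀ (hm : m % 3 = 0) (hφ : IsVQAut m φ) : IsVQAut (m + 3) (sigma₀ φ) :=
  IsVQAut.of_init_last (g := fun b => if b = true then phi₂ φ else phi₃ φ)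
    (fun b => by cases b; exacts [isVQAut_phi₃ hm hφ, isVQAut_phi₂ hm hφ])
    (fun X => by rw [sigma₀, init_applyLow _ le_rfl, applyLow_self])
    (fun X Y => by
      rw [sigma₀, sigma₀, applyLow_of_le _ X (by simp), applyLow_of_le _ Y (by simp)])
    (fun _ _ => vqCross_sigma₀_iff hm hφ.1)

end sigma₀

/-- **Lemma 2.4, case `n = 3k`, `φ = φ₂` when `x_n = 1` and `φ = φ₃` when `x_n = 0`.**
Let `n ≥ 3` be a multiple of `3` and `φ` an automorphism of `VQ_{n-3}`. With
`φ₂ : x_{n-1} x_{n-2} X_{n-3} ↦ x̄_{n-1} x_{n-2} φ(X_{n-3})` and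
`φ₃ : x_{n-1} x_{n-2} X_{n-3} ↦ x̄_{n-1} x̄_{n-2} φ(X_{n-3})` on the vertices of
`VQ_{n-1}`, the map `σ₀` defined by `σ₀(1 X_{n-1}) = 1 φ₂(X_{n-1})` and
`σ₀(0 X_{n-1}) = 0 φ₃(X_{n-1})` is a graph automorphism of `VQ_n`. -/
theorem VQ_sigma0_phi23_isAutomorphism (n : ℕ) (h3 : n % 3 = 0) (hn : 3 ≤ n)
    (φ : VQ (n - 3) ≃g VQ (n - 3)) :
    ∃ σ : VQ n ≃g VQ n, ∀ X : Fin n → Bool,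
      σ X = applyLow (by omega : n - 1 ≤ n)
        (if X ⟨n - 1, by omega⟩ = true then
          fun Z => flipAt (n - 2) (applyLow (by omega : n - 3 ≤ n - 1) (⇑φ) Z)
         else
          fun Z => flipAt (n - 2) (flipAt (n - 3) (applyLow (by omega : n - 3 ≤ n - 1) (⇑φ) Z))) X := by
  obtain ⟨m, rfl⟩ : ∃ m, n = m + 3 := ⟨n - 3, by omega⟩
  exact ⟨(isVQAut_sigma₀ (by omega) (IsVQAut.of_iso φ)).toIso, fun X => rfl⟩
end

section
/- In the 4-dimensional varietal hypercube VQ_4, the edge joining the vertices 0101 and 0001 is contained in a cycle of length 5, but the edge joining the vertices 0101 and 1101 is not contained in any cycle of length 5. -/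
/-!
The edges of `VQ_{n+2}` between its two copies of `VQ_{n+1}` form a perfect matching, so a
triangle of `VQ_{n+2}` cannot use them, and `VQ_n` is triangle-free by induction.

When `3 ∤ n + 2` a cross edge joins `0x` to `1x`, so deleting the leading bit turns a closed walk
of length 5 into a closed walk of `VQ_{n+1}` of length `5 - k`, where `k` is the number of cross
edges used; `k` is even because the walk returns to its starting copy. A closed walk of length
1 or 3 in a triangle-free simple graph is impossible, so `k = 0`: no closed walk of length 5,
let alone a 5-cycle, passes through the edge `0101 - 1101`. The edge `0101 - 0001` lies on the
5-cycle `0101, 0001, 0000, 0010, 0111` of the copy `VQ⁰_4`.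
-/

namespace SimpleGraph

variable {V W : Type*} {G : SimpleGraph V} {H : SimpleGraph W} {u v : V}

def Walk.numCrossings (s : V → Bool) (p : G.Walk u v) : ℕ :=
  p.darts.countP fun d => s d.fst ≠ s d.snd

theorem Walk.numCrossings_cons (s : V → Bool) {w : V} (h : G.Adj u v) (p : G.Walk v w) :
    (cons h p).numCrossings s = p.numCrossings s + if s u = s v then 0 else 1 := by
  simp [numCrossings, List.countP_cons, apply_ite]

theorem Walk.even_numCrossings_iff (s : V → Bool) (p : G.Walk u v) :
    Even (p.numCrossings s) ↔ s u = s v := by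
  induction p with
  | nil => simp [numCrossings]
  | @cons u v w h p ih =>
    rw [numCrossings_cons]
    cases hu : s u <;> cases hv : s v <;> simp_all [Nat.even_add_one]

theorem Walk.numCrossings_pos_of_mem_edges (s : V → Bool) (p : G.Walk u v) {x y : V}
    (he : s(x, y) ∈ p.edges) (hxy : s x ≠ s y) : 0 < p.numCrossings s := by
  obtain ⟨⟨⟨a, b⟩, _⟩, hd, hde⟩ := List.mem_map.1 he
  refine List.countP_pos_iff.2 ⟨_, hd, ?_⟩
  rcases Sym2.eq_iff.1 hde with ⟨rfl, rfl⟩ | ⟨rfl, rfl⟩ <;> simp [hxy, Ne.symm hxy]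

/-- Contracting the edges along which `s` changes maps `G`-walks to `H`-walks. -/
theorem Walk.exists_length_add_numCrossings (f : V → W) (s : V → Bool)
    (hsame : ∀ ⦃x y⦄, G.Adj x y → s x = s y → H.Adj (f x) (f y))
    (hcross : ∀ ⦃x y⦄, G.Adj x y → s x ≠ s y → f x = f y) (p : G.Walk u v) :
    ∃ q : H.Walk (f u) (f v), q.length + p.numCrossings s = p.length := by
  induction p with
  | nil => exact ⟨nil, rfl⟩
  | @cons u v w h p ih =>
    obtain ⟨q, hq⟩ := ih
    rw [numCrossings_cons, length_cons]
    by_cases hs : s u = s v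
    · exact ⟨cons (hsame h hs) q, by simp [hs]; omega⟩
    · exact ⟨q.copy (hcross h hs).symm rfl, by simp [hs]; omega⟩

theorem Walk.length_ne_one_of_closed {w : W} (q : H.Walk w w) : q.length ≠ 1 := by
  match q with
  | .cons h .nil => exact fun _ => h.ne rfl
  | .nil | .cons _ (.cons _ _) => simp

theorem Walk.length_ne_three_of_cliqueFree (hH : H.CliqueFree 3) {w : W} (q : H.Walk w w) :
    q.length ≠ 3 := by
  match q with
  | .cons h₁ (.cons h₂ (.cons h₃ .nil)) =>
    classical exact fun _ => hH _ (is3Clique_triple_iff.2 ⟨h₁, h₃.symm, h₂⟩)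
  | .nil | .cons _ .nil | .cons _ (.cons _ .nil) | .cons _ (.cons _ (.cons _ (.cons _ _))) =>
    simp

theorem Walk.numCrossings_eq_zero_of_length_eq_five (f : V → W) (s : V → Bool)
    (hsame : ∀ ⦃x y⦄, G.Adj x y → s x = s y → H.Adj (f x) (f y))
    (hcross : ∀ ⦃x y⦄, G.Adj x y → s x ≠ s y → f x = f y) (hH : H.CliqueFree 3)
    (p : G.Walk u u) (hp : p.length = 5) : p.numCrossings s = 0 := by
  obtain ⟨q, hq⟩ := p.exists_length_add_numCrossings f s hsame hcross
  obtain ⟨k, hk⟩ := (p.even_numCrossings_iff s).2 rfl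
  have h1 := q.length_ne_one_of_closed
  have h3 := q.length_ne_three_of_cliqueFree hH
  omega

end SimpleGraph

open SimpleGraph

instance decidableVqAdj : ∀ n, DecidableRel (vqAdj n)
  | 0 => fun _ _ => .isFalse id
  | 1 => fun X Y => inferInstanceAs (Decidable (X ≠ Y))
  | n + 2 => fun X Y => by
    have := decidableVqAdj (n + 1)
    unfold vqAdj
    infer_instance

theorem VQ_adj_iff {n : ℕ} {X Y : Fin n → Bool} :
    (VQ n).Adj X Y ↔ X ≠ Y ∧ (vqAdj n X Y ∨ vqAdj n Y X) :=
  fromRel_adj _ _ _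

instance (n : ℕ) : DecidableRel (VQ n).Adj := fun _ _ => decidable_of_iff _ VQ_adj_iff.symm

theorem VQ_adj_init_of_last_eq {n : ℕ} {X Y : Fin (n + 2) → Bool} (h : (VQ (n + 2)).Adj X Y)
    (hl : X (Fin.last _) = Y (Fin.last _)) : (VQ (n + 1)).Adj (Fin.init X) (Fin.init Y) := by
  obtain ⟨hne, hXY⟩ := VQ_adj_iff.1 h
  refine VQ_adj_iff.2 ⟨fun hi => hne ?_, ?_⟩
  · rw [← Fin.snoc_init_self X, ← Fin.snoc_init_self Y, hi, hl]
  · simpa [vqAdj, hl] using hXY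

theorem VQ_init_eq_of_last_ne {n : ℕ} (hn : (n + 2) % 3 ≠ 0) {X Y : Fin (n + 2) → Bool}
    (h : (VQ (n + 2)).Adj X Y) (hl : X (Fin.last _) ≠ Y (Fin.last _)) :
    Fin.init X = Fin.init Y := by
  rcases (VQ_adj_iff.1 h).2 with hXY | hYX
  · simpa [vqAdj, hl, hn] using hXY
  · simpa [vqAdj, Ne.symm hl, hn, eq_comm] using hYX

theorem vqAdj_of_last_ne_of_mod_three_eq_zero {n : ℕ} (hn : (n + 2) % 3 = 0)
    {X Y : Fin (n + 2) → Bool} (h : vqAdj (n + 2) X Y) (hl : X (Fin.last _) ≠ Y (Fin.last _)) :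
    (∀ i : Fin (n + 2), (i : ℕ) < n - 1 → X i = Y i) ∧ Y ⟨n, by omega⟩ = X ⟨n, by omega⟩ ∧
      Y ⟨n - 1, by omega⟩ = xor (X ⟨n, by omega⟩) (X ⟨n - 1, by omega⟩) := by
  simpa [vqAdj, hl, hn] using h

theorem VQ_apply_of_last_ne {n : ℕ} {X Y : Fin (n + 2) → Bool} (h : (VQ (n + 2)).Adj X Y)
    (hl : X (Fin.last _) ≠ Y (Fin.last _)) (i : Fin (n + 2)) (hi : i ≠ Fin.last _) :
    Y i = if (n + 2) % 3 = 0 ∧ (i : ℕ) = n - 1 then xor (X ⟨n, by omega⟩) (X i) else X i := by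
  obtain ⟨j, rfl⟩ := Fin.exists_castSucc_eq.2 hi
  by_cases hn : (n + 2) % 3 = 0
  · have hj : (j : ℕ) < n - 1 ∨ j.castSucc = ⟨n - 1, by omega⟩ ∨ j.castSucc = ⟨n, by omega⟩ := by
      simp only [Fin.ext_iff, Fin.val_castSucc]; omega
    rcases (VQ_adj_iff.1 h).2 with hXY | hYX
    · obtain ⟨hlow, htop, hmid⟩ := vqAdj_of_last_ne_of_mod_three_eq_zero hn hXY hl
      rcases hj with hj | hj | hj
      · simpa [hn, show (j : ℕ) ≠ n - 1 by omega] using (hlow _ hj).symm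
      · simpa [hj, hn] using hmid
      · simpa [hj, hn, show n ≠ n - 1 by omega] using htop
    · obtain ⟨hlow, htop, hmid⟩ := vqAdj_of_last_ne_of_mod_three_eq_zero hn hYX (Ne.symm hl)
      rcases hj with hj | hj | hj
      · simpa [hn, show (j : ℕ) ≠ n - 1 by omega] using hlow _ hj
      · rw [hj, hmid, htop]; simp [hn]
      · simpa [hj, hn, show n ≠ n - 1 by omega] using htop.symm
  · simpa [hn, Fin.init] using congrFun (VQ_init_eq_of_last_ne hn h hl).symm j

theorem VQ_eq_of_adj_of_adj_of_last_ne {n : ℕ} {X Y Z : Fin (n + 2) → Bool}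
    (hY : (VQ (n + 2)).Adj X Y) (hZ : (VQ (n + 2)).Adj X Z)
    (hlY : X (Fin.last _) ≠ Y (Fin.last _)) (hlZ : X (Fin.last _) ≠ Z (Fin.last _)) : Y = Z := by
  funext i
  by_cases hi : i = Fin.last _
  · subst hi
    exact (Bool.eq_not_iff.2 hlY.symm).trans (Bool.eq_not_iff.2 hlZ.symm).symm
  · rw [VQ_apply_of_last_ne hY hlY i hi, VQ_apply_of_last_ne hZ hlZ i hi]

theorem VQ_cliqueFree_three : ∀ n, (VQ n).CliqueFree 3
  | 0 => cliqueFree_of_card_lt (by simp)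
  | 1 => cliqueFree_of_card_lt (by simp)
  | n + 2 => by
    classical
    intro t ht
    obtain ⟨a, b, c, hab, hac, hbc, rfl⟩ := is3Clique_iff.1 ht
    by_cases hlb : a (Fin.last _) = b (Fin.last _) <;>
      by_cases hlc : a (Fin.last _) = c (Fin.last _)
    · exact VQ_cliqueFree_three (n + 1) _ <| is3Clique_triple_iff.2
        ⟨VQ_adj_init_of_last_eq hab hlb, VQ_adj_init_of_last_eq hac hlc,
          VQ_adj_init_of_last_eq hbc (hlb ▸ hlc)⟩
    · exact hab.ne <| VQ_eq_of_adj_of_adj_of_last_ne hac.symm hbc.symm (Ne.symm hlc)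
        (hlb ▸ Ne.symm hlc)
    · exact hac.ne <| VQ_eq_of_adj_of_adj_of_last_ne hab.symm hbc (Ne.symm hlb)
        (hlc ▸ Ne.symm hlb)
    · exact hbc.ne (VQ_eq_of_adj_of_adj_of_last_ne hab hac hlb hlc)

theorem VQ_mk_notMem_edges_of_length_eq_five {n : ℕ} (hn : (n + 2) % 3 ≠ 0)
    {u X Y : Fin (n + 2) → Bool} (p : (VQ (n + 2)).Walk u u) (hp : p.length = 5)
    (hXY : X (Fin.last _) ≠ Y (Fin.last _)) : s(X, Y) ∉ p.edges := fun he =>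
  (p.numCrossings_pos_of_mem_edges _ he hXY).ne' <|
    p.numCrossings_eq_zero_of_length_eq_five Fin.init _ (fun _ _ => VQ_adj_init_of_last_eq)
      (fun _ _ => VQ_init_eq_of_last_ne hn) (VQ_cliqueFree_three _) hp

/-- In `VQ_4`, the edge joining `0101` and `0001` lies on a cycle of length `5`, but
the edge joining `0101` and `1101` does not. (A vertex `x₄x₃x₂x₁` is encoded as
`![x₁, x₂, x₃, x₄]`, with `0 = false`, `1 = true`.) -/
theorem VQ4_edge_cycle_length_five :
    (∃ (v : Fin 4 → Bool) (c : (VQ 4).Walk v v), c.IsCycle ∧ c.length = 5 ∧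
      s(![true, false, true, false], ![true, false, false, false]) ∈ c.edges) ∧
    ¬ (∃ (v : Fin 4 → Bool) (c : (VQ 4).Walk v v), c.IsCycle ∧ c.length = 5 ∧
      s(![true, false, true, false], ![true, false, true, true]) ∈ c.edges) := by
  refine ⟨⟨![true, false, true, false], .cons (v := ![true, false, false, false]) (by decide) <|
    .cons (v := ![false, false, false, false]) (by decide) <|
    .cons (v := ![false, true, false, false]) (by decide) <|
    .cons (v := ![true, true, true, false]) (by decide) <| .cons (by decide) .nil,
    (Walk.cons_isCycle_iff _ _).2 ⟨(Walk.isPath_def _).2 (by decide), by decide⟩, rfl,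
    by decide⟩, ?_⟩
  rintro ⟨v, c, -, hc, he⟩
  exact VQ_mk_notMem_edges_of_length_eq_five (n := 2) (by norm_num) c hc (by decide) he
end

section
/- The 4-dimensional varietal hypercube VQ_4 is not edge-transitive: there is no graph automorphism σ of VQ_4 with {σ(0101), σ(1101)} = {0101, 0001}, even though both pairs 0101, 1101 and 0101, 0001 are edges of VQ_4. -/
/-!
The number of 4-cycles through an edge is invariant under graph isomorphisms and does not
depend on the orientation of the edge. In `VQ_4` the edge `0101 — 1101` lies on three 4-cycles,
but the edge `0101 — 0001` lies on only two, so no automorphism maps one onto the other.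
-/

open Finset

instance vqAdjDecidable : ∀ (n : ℕ) (X Y : Fin n → Bool), Decidable (vqAdj n X Y)
  | 0, _, _ => isFalse id
  | 1, X, Y => inferInstanceAs (Decidable (X ≠ Y))
  | (n + 2), X, Y => by
    letI := vqAdjDecidable (n + 1) (Fin.init X) (Fin.init Y)
    unfold vqAdj
    infer_instance

instance inst_s10 (n : ℕ) : DecidableRel (VQ n).Adj :=
  fun X Y => decidable_of_iff _ (SimpleGraph.fromRel_adj _ X Y).symm

namespace SimpleGraph

variable {V W : Type*} [Fintype V] [DecidableEq V] [Fintype W] [DecidableEq W]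

/-- For an edge `x y`, the pairs `(u, v)` closing it to a 4-cycle `x u v y`. -/
def squaresThrough (G : SimpleGraph V) [DecidableRel G.Adj] (x y : V) : ℕ :=
  #{p : V × V | p.1 ≠ y ∧ p.2 ≠ x ∧ G.Adj x p.1 ∧ G.Adj y p.2 ∧ G.Adj p.1 p.2}

variable {G : SimpleGraph V} [DecidableRel G.Adj] {H : SimpleGraph W} [DecidableRel H.Adj]

theorem squaresThrough_comm (x y : V) : G.squaresThrough x y = G.squaresThrough y x :=
  card_equiv (Equiv.prodComm V V) fun p => by
    simp only [mem_filter, mem_univ, true_and, Equiv.prodComm_apply, Prod.fst_swap,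
      Prod.snd_swap, G.adj_comm p.2 p.1]
    tauto

theorem Iso.squaresThrough_eq (e : G ≃g H) (x y : V) :
    H.squaresThrough (e x) (e y) = G.squaresThrough x y :=
  (card_equiv (e.toEquiv.prodCongr e.toEquiv) fun p => by
    simp [e.map_adj_iff]).symm

theorem Iso.squaresThrough_eq_of_pair_eq (e : G ≃g H) {x y : V} {u v : W}
    (h : ({e x, e y} : Set W) = {u, v}) : G.squaresThrough x y = H.squaresThrough u v := by
  rcases Set.pair_eq_pair_iff.mp h with ⟨rfl, rfl⟩ | ⟨rfl, rfl⟩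
  · exact (e.squaresThrough_eq x y).symm
  · rw [squaresThrough_comm (G := H), e.squaresThrough_eq]

end SimpleGraph

/-- A vertex `x₄x₃x₂x₁` is encoded as `![x₁, x₂, x₃, x₄]`, with `0 = false`, `1 = true`. -/
theorem VQ4_not_edgeTransitive :
    (VQ 4).Adj ![true, false, true, false] ![true, false, true, true] ∧
    (VQ 4).Adj ![true, false, true, false] ![true, false, false, false] ∧
    ¬ ∃ σ : VQ 4 ≃g VQ 4,
      ({σ ![true, false, true, false], σ ![true, false, true, true]} : Set (Fin 4 → Bool)) =
        {![true, false, true, false], ![true, false, false, false]} := by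
  refine ⟨by decide, by decide, ?_⟩
  rintro ⟨σ, hσ⟩
  have h3 : (VQ 4).squaresThrough ![true, false, true, false] ![true, false, true, true] = 3 := by
    decide
  have h2 : (VQ 4).squaresThrough ![true, false, true, false] ![true, false, false, false] = 2 := by
    decide
  have := σ.squaresThrough_eq_of_pair_eq hσ
  omega
end
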